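/- Let M, N be positive integers and let A be a nonzero real M×N matrix. Then there exist unit vectors u ∈ ℝ^M and v ∈ ℝ^N such that the rank-at-most-one matrix B = ‖A‖₂ • u vᵀ satisfies ‖A − B‖_F² = ‖A‖_F² − ‖A‖₂². Consequently the minimum of ‖A − B‖_F over matrices B of rank at most one equals √(‖A‖_F² − ‖A‖₂²). -/

import Mathlib

/-- The Frobenius norm of a real M×N matrix. -/
noncomputable def frobNorm {M N : ℕ} (A : Matrix (Fin M) (Fin N) ℝ) : ℝ :=
  Real.sqrt (∑ i : Fin M, ∑ j : Fin N, (A i j) ^ 2)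

/-- The spectral norm (ℓ²→ℓ² operator norm) of a real M×N matrix:
the supremum of `‖A v‖₂` over unit vectors `v`. -/
noncomputable def specNorm {M N : ℕ} (A : Matrix (Fin M) (Fin N) ℝ) : ℝ :=
  sSup {r : ℝ | ∃ v : Fin N → ℝ, Real.sqrt (∑ j : Fin N, (v j) ^ 2) = 1 ∧
    r = Real.sqrt (∑ i : Fin M, (A.mulVec v i) ^ 2)}

/-! For a rank-one matrix `B = x yᵀ` one has
`‖A - B‖_F² = ‖A‖_F² - 2 ⟪x, A y⟫ + ‖x‖² ‖y‖²` and `⟪x, A y⟫ ≤ ‖A‖₂ ‖x‖ ‖y‖`, hence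
`‖A - B‖_F² ≥ ‖A‖_F² - ‖A‖₂² + (‖x‖ ‖y‖ - ‖A‖₂)²`. Equality holds for `x = A v`, `y = v`, where
the unit vector `v` attains `‖A v‖ = ‖A‖₂` by compactness of the unit sphere; writing
`A v = ‖A‖₂ u` gives the unit vector `u`. -/

open Matrix

theorem ContinuousLinearMap.exists_norm_eq_one_norm_apply_eq_opNorm {E F : Type*}
    [NormedAddCommGroup E] [NormedSpace ℝ E] [FiniteDimensional ℝ E] [Nontrivial E]
    [SeminormedAddCommGroup F] [NormedSpace ℝ F] (f : E →L[ℝ] F) :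
    ∃ x, ‖x‖ = 1 ∧ ‖f x‖ = ‖f‖ := by
  have hmem := ((isCompact_sphere (0 : E) 1).image (continuous_norm.comp f.continuous)).sSup_mem
    ((NormedSpace.sphere_nonempty.2 zero_le_one).image _)
  obtain ⟨x, hx, hfx⟩ := f.sSup_sphere_eq_norm ▸ hmem
  exact ⟨x, mem_sphere_zero_iff_norm.1 hx, hfx⟩

theorem Matrix.exists_vecMulVec_eq_of_rank_le_one {K m n : Type*} [Field K] [Fintype n]
    [DecidableEq n] {B : Matrix m n K} (hB : B.rank ≤ 1) :
    ∃ x y, B = vecMulVec x y := by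
  obtain ⟨x, hx⟩ := ((Submodule.finrank_le_one_iff_isPrincipal _).1 hB).principal
  have hcol (j : n) : ∃ c : K, c • x = B.col j := by
    have hmem : B *ᵥ Pi.single j 1 ∈ LinearMap.range B.mulVecLin := ⟨Pi.single j 1, rfl⟩
    rwa [hx, Submodule.mem_span_singleton, mulVec_single, MulOpposite.op_one, one_smul] at hmem
  choose y hy using hcol
  refine ⟨x, y, ext fun i j => ?_⟩
  rw [vecMulVec_apply, mul_comm, ← col_apply B j i, ← hy j]
  rfl

open scoped Matrix.Norms.L2Operator

lemma norm_toLp_eq_sqrt_sum_sq {n : ℕ} (v : Fin n → ℝ) :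
    ‖(WithLp.toLp 2 v : EuclideanSpace ℝ (Fin n))‖ = √(∑ j, v j ^ 2) := by
  simp [EuclideanSpace.norm_eq]

section

variable {m n : ℕ}

lemma norm_toEuclideanLin_toLp (A : Matrix (Fin m) (Fin n) ℝ) (v : Fin n → ℝ) :
    ‖(toEuclideanLin.trans LinearMap.toContinuousLinearMap A) (WithLp.toLp 2 v)‖ =
      √(∑ i, (A *ᵥ v) i ^ 2) := by
  simp only [LinearEquiv.trans_apply, LinearMap.coe_toContinuousLinearMap', toLpLin_toLp,
    toLin'_apply, norm_toLp_eq_sqrt_sum_sq]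

lemma specNorm_eq_l2_opNorm (A : Matrix (Fin m) (Fin n) ℝ) : specNorm A = ‖A‖ := by
  rw [l2_opNorm_def, ← ContinuousLinearMap.sSup_sphere_eq_norm, specNorm]
  congr 1
  ext r
  simp only [Set.mem_ofPred_eq, Set.mem_image, mem_sphere_zero_iff_norm]
  constructor
  · rintro ⟨v, hv, rfl⟩
    exact ⟨WithLp.toLp 2 v, by rwa [norm_toLp_eq_sqrt_sum_sq], norm_toEuclideanLin_toLp A v⟩
  · rintro ⟨⟨v⟩, hv, rfl⟩
    exact ⟨v, by rwa [← norm_toLp_eq_sqrt_sum_sq], norm_toEuclideanLin_toLp A v⟩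

lemma sqrt_sum_mulVec_sq_le (A : Matrix (Fin m) (Fin n) ℝ) (v : Fin n → ℝ) :
    √(∑ i, (A *ᵥ v) i ^ 2) ≤ specNorm A * √(∑ j, v j ^ 2) := by
  rw [specNorm_eq_l2_opNorm, ← norm_toLp_eq_sqrt_sum_sq, ← norm_toLp_eq_sqrt_sum_sq]
  exact A.l2_opNorm_mulVec (WithLp.toLp 2 v)

lemma exists_sqrt_sum_mulVec_sq_eq_specNorm (hn : 0 < n) (A : Matrix (Fin m) (Fin n) ℝ) :
    ∃ v : Fin n → ℝ, √(∑ j, v j ^ 2) = 1 ∧ √(∑ i, (A *ᵥ v) i ^ 2) = specNorm A := by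
  have : NeZero n := ⟨hn.ne'⟩
  obtain ⟨⟨v⟩, hv, hAv⟩ :=
    (toEuclideanLin.trans LinearMap.toContinuousLinearMap A).exists_norm_eq_one_norm_apply_eq_opNorm
  refine ⟨v, by rwa [← norm_toLp_eq_sqrt_sum_sq], ?_⟩
  rw [specNorm_eq_l2_opNorm, l2_opNorm_def, ← hAv, norm_toEuclideanLin_toLp]

lemma specNorm_pos {A : Matrix (Fin m) (Fin n) ℝ} (hA : A ≠ 0) : 0 < specNorm A := by
  rwa [specNorm_eq_l2_opNorm, norm_pos_iff]

lemma dotProduct_mulVec_le (A : Matrix (Fin m) (Fin n) ℝ) (x : Fin m → ℝ) (y : Fin n → ℝ) :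
    x ⬝ᵥ (A *ᵥ y) ≤ specNorm A * √(∑ i, x i ^ 2) * √(∑ j, y j ^ 2) :=
  calc x ⬝ᵥ (A *ᵥ y) ≤ √(∑ i, x i ^ 2) * √(∑ i, (A *ᵥ y) i ^ 2) :=
        Real.sum_mul_le_sqrt_mul_sqrt _ _ _
    _ ≤ √(∑ i, x i ^ 2) * (specNorm A * √(∑ j, y j ^ 2)) := by
        gcongr; exact sqrt_sum_mulVec_sq_le A y
    _ = specNorm A * √(∑ i, x i ^ 2) * √(∑ j, y j ^ 2) := by ring

lemma frobNorm_nonneg (A : Matrix (Fin m) (Fin n) ℝ) : 0 ≤ frobNorm A :=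
  Real.sqrt_nonneg _

lemma frobNorm_sq (A : Matrix (Fin m) (Fin n) ℝ) : frobNorm A ^ 2 = ∑ i, ∑ j, A i j ^ 2 :=
  Real.sq_sqrt <| Finset.sum_nonneg fun _ _ => Finset.sum_nonneg fun _ _ => sq_nonneg _

lemma frobNorm_sub_vecMulVec_sq (A : Matrix (Fin m) (Fin n) ℝ) (x : Fin m → ℝ) (y : Fin n → ℝ) :
    frobNorm (A - vecMulVec x y) ^ 2 =
      frobNorm A ^ 2 - 2 * x ⬝ᵥ (A *ᵥ y) + (∑ i, x i ^ 2) * ∑ j, y j ^ 2 := by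
  rw [frobNorm_sq, frobNorm_sq, Finset.sum_mul_sum, dotProduct, Finset.mul_sum,
    ← Finset.sum_sub_distrib, ← Finset.sum_add_distrib]
  refine Finset.sum_congr rfl fun i _ => ?_
  simp only [Matrix.sub_apply, vecMulVec_apply, mulVec, dotProduct, Finset.mul_sum,
    ← Finset.sum_sub_distrib, ← Finset.sum_add_distrib]
  exact Finset.sum_congr rfl fun j _ => by ring

lemma frobNorm_sq_sub_specNorm_sq_le (A : Matrix (Fin m) (Fin n) ℝ)
    {B : Matrix (Fin m) (Fin n) ℝ} (hB : B.rank ≤ 1) :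
    frobNorm A ^ 2 - specNorm A ^ 2 ≤ frobNorm (A - B) ^ 2 := by
  obtain ⟨x, y, rfl⟩ := exists_vecMulVec_eq_of_rank_le_one hB
  have hxy := dotProduct_mulVec_le A x y
  rw [frobNorm_sub_vecMulVec_sq, ← Real.sq_sqrt (Finset.sum_nonneg fun i _ => sq_nonneg (x i)),
    ← Real.sq_sqrt (Finset.sum_nonneg fun j _ => sq_nonneg (y j))]
  nlinarith [sq_nonneg (√(∑ i, x i ^ 2) * √(∑ j, y j ^ 2) - specNorm A)]

lemma exists_frobNorm_sub_specNorm_smul_vecMulVec_sq_eq (hn : 0 < n)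
    {A : Matrix (Fin m) (Fin n) ℝ} (hA : A ≠ 0) :
    ∃ (u : Fin m → ℝ) (v : Fin n → ℝ), √(∑ i, u i ^ 2) = 1 ∧ √(∑ j, v j ^ 2) = 1 ∧
      frobNorm (A - specNorm A • vecMulVec u v) ^ 2 = frobNorm A ^ 2 - specNorm A ^ 2 := by
  obtain ⟨v, hv, hAv⟩ := exists_sqrt_sum_mulVec_sq_eq_specNorm hn A
  have hσ := specNorm_pos hA
  have hv' : ∑ j, v j ^ 2 = 1 := Real.sqrt_eq_one.1 hv
  have hAv' : ∑ i, (A *ᵥ v) i ^ 2 = specNorm A ^ 2 := by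
    rw [← hAv, Real.sq_sqrt (Finset.sum_nonneg fun i _ => sq_nonneg _)]
  refine ⟨(specNorm A)⁻¹ • (A *ᵥ v), v, ?_, hv, ?_⟩
  · simp only [Pi.smul_apply, smul_eq_mul, mul_pow, ← Finset.mul_sum, hAv']
    rw [← mul_pow, inv_mul_cancel₀ hσ.ne', one_pow, Real.sqrt_one]
  · rw [← smul_vecMulVec, smul_inv_smul₀ hσ.ne', frobNorm_sub_vecMulVec_sq, hv', mul_one,
      show (A *ᵥ v) ⬝ᵥ (A *ᵥ v) = ∑ i, (A *ᵥ v) i ^ 2 by simp only [dotProduct, sq], hAv']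
    ring

end

theorem stmt_7_general (M N : ℕ) (hN : 0 < N)
    (A : Matrix (Fin M) (Fin N) ℝ) (hA : A ≠ 0) :
    (∃ (u : Fin M → ℝ) (v : Fin N → ℝ),
      Real.sqrt (∑ i : Fin M, (u i) ^ 2) = 1 ∧
      Real.sqrt (∑ j : Fin N, (v j) ^ 2) = 1 ∧
      (Matrix.vecMulVec u v).rank ≤ 1 ∧
      (frobNorm (A - specNorm A • Matrix.vecMulVec u v)) ^ 2 =
        (frobNorm A) ^ 2 - (specNorm A) ^ 2) ∧
    IsLeast {r : ℝ | ∃ B : Matrix (Fin M) (Fin N) ℝ, B.rank ≤ 1 ∧ r = frobNorm (A - B)}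
      (Real.sqrt ((frobNorm A) ^ 2 - (specNorm A) ^ 2)) := by
  obtain ⟨u, v, hu, hv, hmin⟩ := exists_frobNorm_sub_specNorm_smul_vecMulVec_sq_eq hN hA
  refine ⟨⟨u, v, hu, hv, rank_vecMulVec_le u v, hmin⟩, ?_, ?_⟩
  · refine ⟨specNorm A • vecMulVec u v, ?_, ?_⟩
    · rw [← smul_vecMulVec]
      exact rank_vecMulVec_le _ v
    · rw [← hmin, Real.sqrt_sq (frobNorm_nonneg _)]
  · rintro r ⟨B, hB, rfl⟩
    exact Real.sqrt_le_iff.2 ⟨frobNorm_nonneg _, frobNorm_sq_sub_specNorm_sq_le A hB⟩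

/-- For a nonzero matrix A there are unit vectors u, v with
`B = ‖A‖₂ • u vᵀ` attaining `‖A − B‖_F² = ‖A‖_F² − ‖A‖₂²`; consequently the
minimum of `‖A − B‖_F` over rank-at-most-one matrices B is
`√(‖A‖_F² − ‖A‖₂²)`. -/
theorem stmt_7 (M N : ℕ) (hM : 0 < M) (hN : 0 < N)
    (A : Matrix (Fin M) (Fin N) ℝ) (hA : A ≠ 0) :
    (∃ (u : Fin M → ℝ) (v : Fin N → ℝ),
      Real.sqrt (∑ i : Fin M, (u i) ^ 2) = 1 ∧
      Real.sqrt (∑ j : Fin N, (v j) ^ 2) = 1 ∧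
      (Matrix.vecMulVec u v).rank ≤ 1 ∧
      (frobNorm (A - specNorm A • Matrix.vecMulVec u v)) ^ 2 =
        (frobNorm A) ^ 2 - (specNorm A) ^ 2) ∧
    IsLeast {r : ℝ | ∃ B : Matrix (Fin M) (Fin N) ℝ, B.rank ≤ 1 ∧ r = frobNorm (A - B)}
      (Real.sqrt ((frobNorm A) ^ 2 - (specNorm A) ^ 2)) :=
  stmt_7_general M N hN A hA
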